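/- arXiv:1403.0235 — 2 statements merged into one kernel-verified Lean document; each statement's English description precedes it below -/
import Mathlib

section
/- Let f(r) = r·sin(log r) + 6r for r ≥ 1. Then f'(r)·r − f(r) = r·cos(log r), and there exists a sequence r_k → ∞ (namely r_k = e^{2πk}) with |f'(r_k)·r_k − f(r_k)| = r_k. Hence the support function ⟨x₀,ν⟩ = (f'(r)r − f(r))/√(1+f'(r)²) of the associated surface of revolution satisfies ⟨x₀,ν⟩(r_k,θ)² ≥ γ·r_k² for some γ > 0, so ⟨x₀,ν⟩² is not o(|x₀|²). -/
open Real Filter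

/-!
Along `r = exp (2πk)` we have `sin (log r) = 0` and `cos (log r) = 1`, so the numerator
`f' r * r - f r = r * cos (log r)` of the support function equals `r` while the slope `f' r`
is the constant `7`; hence the squared support function is exactly `r² / 50`.
-/

lemma sin_two_pi_mul_natCast (k : ℕ) : sin (2 * π * k) = 0 := by
  rw [mul_comm, ← mul_assoc, mul_comm (k : ℝ) 2]
  exact_mod_cast sin_nat_mul_pi (2 * k)

lemma cos_two_pi_mul_natCast (k : ℕ) : cos (2 * π * k) = 1 := by
  rw [mul_comm]
  exact cos_nat_mul_two_pi k

lemma tendsto_exp_two_pi_mul_natCast_atTop :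
    Tendsto (fun k : ℕ => exp (2 * π * k)) atTop atTop :=
  tendsto_exp_atTop.comp (tendsto_natCast_atTop_atTop.const_mul_atTop (by positivity))

lemma div_sqrt_one_add_sq_sq (a b : ℝ) : (a / √(1 + b ^ 2)) ^ 2 = a ^ 2 / (1 + b ^ 2) := by
  rw [div_pow, sq_sqrt (by positivity)]

theorem example_support_function_growth :
    let f : ℝ → ℝ := fun r => r * Real.sin (Real.log r) + 6 * r
    let f' : ℝ → ℝ := fun r => Real.sin (Real.log r) + Real.cos (Real.log r) + 6
    let rk : ℕ → ℝ := fun k => Real.exp (2 * Real.pi * k)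
    (∀ r : ℝ, 1 ≤ r → f' r * r - f r = r * Real.cos (Real.log r)) ∧
    Tendsto rk atTop atTop ∧
    (∀ k : ℕ, |f' (rk k) * rk k - f (rk k)| = rk k) ∧
    (∃ γ : ℝ, 0 < γ ∧ ∀ k : ℕ,
      ((f' (rk k) * rk k - f (rk k)) / Real.sqrt (1 + f' (rk k) ^ 2)) ^ 2
        ≥ γ * rk k ^ 2) := by
  intro f f' rk
  have slope : ∀ k, f' (rk k) = 7 := fun k => by
    simp only [f', rk, log_exp, sin_two_pi_mul_natCast, cos_two_pi_mul_natCast]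
    norm_num
  have numerator : ∀ k, f' (rk k) * rk k - f (rk k) = rk k := fun k => by
    simp only [slope, f, rk, log_exp, sin_two_pi_mul_natCast]
    ring
  refine ⟨fun r _ => by simp only [f, f']; ring, tendsto_exp_two_pi_mul_natCast_atTop,
    fun k => by rw [numerator, abs_of_pos (exp_pos _)], 1 / (1 + 7 ^ 2), by positivity,
    fun k => ?_⟩
  rw [numerator, slope, div_sqrt_one_add_sq_sq]
  exact (one_div_mul_eq_div (1 + 7 ^ 2 : ℝ) _).le
end

section
/- Let u₀(x̂) = |x̂|·sin(log|x̂|) for x̂ ∈ ℝ² with |x̂| ≥ 1. Then the gradient of u₀ is uniformly bounded on {|x̂| ≥ 1}: indeed |∇u₀(x̂)| ≤ √2 for |x̂| ≥ 1. Moreover, along the sequence |x̂_k| = e^{2πk}, one has u₀(x̂_k) = 0 and x̂_k·∇u₀(x̂_k) − u₀(x̂_k) = |x̂_k|·cos(log|x̂_k|) = |x̂_k|. -/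
/-!
`u₀ = g ∘ ‖·‖` with `g t = t sin (log t)` is radial, so `∇u₀ x = g'(‖x‖) • x / ‖x‖` where
`g' t = sin (log t) + cos (log t)`. Hence `‖∇u₀‖ = |sin + cos| ≤ √2`, and
`⟪x, ∇u₀ x⟫ - u₀ x = t g' t - g t = t cos (log t)` with `t = ‖x‖`; on the circles
`t = exp (2πk)` the angle `log t` is a multiple of `2π`.
-/

open Real InnerProductSpace

section Radial

variable {F : Type*} [NormedAddCommGroup F] [InnerProductSpace ℝ F]

theorem hasFDerivAt_norm_of_ne_zero {x : F} (hx : x ≠ 0) :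
    HasFDerivAt (‖·‖) (‖x‖⁻¹ • innerSL ℝ x) x := by
  have hnorm : (‖·‖) = (√·) ∘ fun y : F => ‖y‖ ^ 2 :=
    funext fun y => (sqrt_sq (norm_nonneg y)).symm
  have hsqrt := (hasDerivAt_sqrt (pow_pos (norm_pos_iff.2 hx) 2).ne').comp_hasFDerivAt x
    (hasStrictFDerivAt_norm_sq x).hasFDerivAt
  rw [sqrt_sq (norm_nonneg x)] at hsqrt
  rw [hnorm]
  refine hsqrt.congr_fderiv ?_
  rw [two_nsmul, ← two_smul ℝ, smul_smul]
  congr 1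
  field_simp

theorem HasDerivAt.hasGradientAt_comp_norm [CompleteSpace F] {g : ℝ → ℝ} {g' : ℝ} {x : F}
    (hg : HasDerivAt g g' ‖x‖) (hx : x ≠ 0) :
    HasGradientAt (fun y => g ‖y‖) ((g' / ‖x‖) • x) x := by
  rw [hasGradientAt_iff_hasFDerivAt]
  refine (hg.comp_hasFDerivAt x (hasFDerivAt_norm_of_ne_zero hx)).congr_fderiv ?_
  ext y
  simp [div_eq_mul_inv, mul_assoc]

end Radial

theorem hasDerivAt_mul_sin_log {t : ℝ} (ht : t ≠ 0) :
    HasDerivAt (fun s => s * sin (log s)) (sin (log t) + cos (log t)) t := by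
  refine ((hasDerivAt_id' t).mul (hasDerivAt_log ht).sin).congr_deriv ?_
  field_simp

theorem abs_sin_add_cos_le_sqrt_two (θ : ℝ) : |sin θ + cos θ| ≤ √2 := by
  rw [← sqrt_sq_eq_abs]
  refine sqrt_le_sqrt ?_
  -- `(sin θ + cos θ) ^ 2 = 1 + sin (2 * θ)`
  nlinarith [sin_sq_add_cos_sq θ, sin_two_mul θ, sin_le_one (2 * θ)]

section LogSpiral

variable {F : Type*} [NormedAddCommGroup F] [InnerProductSpace ℝ F] [CompleteSpace F]
  {x : F}

theorem gradient_norm_mul_sin_log_norm (hx : x ≠ 0) :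
    gradient (fun y : F => ‖y‖ * sin (log ‖y‖)) x
      = ((sin (log ‖x‖) + cos (log ‖x‖)) / ‖x‖) • x :=
  ((hasDerivAt_mul_sin_log (norm_ne_zero_iff.2 hx)).hasGradientAt_comp_norm hx).gradient

theorem norm_gradient_norm_mul_sin_log_norm (hx : x ≠ 0) :
    ‖gradient (fun y : F => ‖y‖ * sin (log ‖y‖)) x‖ = |sin (log ‖x‖) + cos (log ‖x‖)| := by
  rw [gradient_norm_mul_sin_log_norm hx, norm_smul, norm_div, norm_norm, Real.norm_eq_abs,
    div_mul_cancel₀ _ (norm_ne_zero_iff.2 hx)]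

theorem inner_gradient_sub_norm_mul_sin_log_norm (hx : x ≠ 0) :
    ⟪x, gradient (fun y : F => ‖y‖ * sin (log ‖y‖)) x⟫_ℝ - ‖x‖ * sin (log ‖x‖)
      = ‖x‖ * cos (log ‖x‖) := by
  rw [gradient_norm_mul_sin_log_norm hx, real_inner_smul_right, real_inner_self_eq_norm_sq]
  field_simp
  ring

end LogSpiral

theorem sin_log_exp_two_pi_mul_nat (k : ℕ) : sin (log (exp (2 * π * k))) = 0 := by
  rw [log_exp, show 2 * π * k = (2 * k : ℕ) * π by push_cast; ring, sin_nat_mul_pi]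

theorem cos_log_exp_two_pi_mul_nat (k : ℕ) : cos (log (exp (2 * π * k))) = 1 := by
  rw [log_exp, mul_comm, cos_nat_mul_two_pi]

theorem ecker_huisken_graph_example :
    let u₀ : EuclideanSpace ℝ (Fin 2) → ℝ := fun x => ‖x‖ * Real.sin (Real.log ‖x‖)
    (∀ x : EuclideanSpace ℝ (Fin 2), 1 ≤ ‖x‖ → ‖gradient u₀ x‖ ≤ Real.sqrt 2) ∧
    (∀ (k : ℕ) (x : EuclideanSpace ℝ (Fin 2)), ‖x‖ = Real.exp (2 * Real.pi * k) →
      u₀ x = 0 ∧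
      inner ℝ x (gradient u₀ x) - u₀ x = ‖x‖ * Real.cos (Real.log ‖x‖) ∧
      (‖x‖ * Real.cos (Real.log ‖x‖) = ‖x‖)) := by
  intro u₀
  refine ⟨fun x hx => ?_, fun k x hx => ?_⟩
  · have hx0 : x ≠ 0 := norm_pos_iff.1 (one_pos.trans_le hx)
    rw [norm_gradient_norm_mul_sin_log_norm hx0]
    exact abs_sin_add_cos_le_sqrt_two _
  · have hx0 : x ≠ 0 := norm_pos_iff.1 (hx ▸ exp_pos _)
    refine ⟨?_, inner_gradient_sub_norm_mul_sin_log_norm hx0, ?_⟩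
    · simp only [u₀, hx, sin_log_exp_two_pi_mul_nat, mul_zero]
    · rw [hx, cos_log_exp_two_pi_mul_nat, mul_one]
end
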